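/- For any smooth function v(x,t) and constants β > 0, a > 2, λ > 2, the pointwise inequality [v_t + λ(T−t+a)^(λ−1) v + βΔv]² ≥ (λ²/2)(T−t+a)^(λ−2) v² + ∂_t[λ(T−t+a)^(λ−1) v² − β|∇v|²] + Σᵢ ∂_{xᵢ}(2β v_t v_{xᵢ}) holds on Ω × (0,T). -/

import Mathlib

open Real Set

/-- Spatial Laplacian of `f : ℝⁿ → ℝ`. -/
noncomputable def lap {n : ℕ} (f : EuclideanSpace ℝ (Fin n) → ℝ)
    (x : EuclideanSpace ℝ (Fin n)) : ℝ :=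
  ∑ i : Fin n,
    fderiv ℝ (fun y => fderiv ℝ f y (EuclideanSpace.single i 1)) x
      (EuclideanSpace.single i 1)

set_option maxHeartbeats 2000000 in
/-- Pointwise inequality on `Ω × (0,T)`:
`[v_t + λ(T−t+a)^{λ−1} v + βΔv]² ≥ (λ²/2)(T−t+a)^{λ−2} v²
 + ∂_t[λ(T−t+a)^{λ−1} v² − β|∇v|²] + Σᵢ ∂_{xᵢ}(2β v_t v_{xᵢ})`. -/
theorem stmt_4 {n : ℕ} (Ω : Set (EuclideanSpace ℝ (Fin n)))
    (hΩ : Bornology.IsBounded Ω) (T β a lam : ℝ)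
    (hT : 0 < T) (hβ : 0 < β) (ha : 2 < a) (hlam : 2 < lam)
    (v : EuclideanSpace ℝ (Fin n) → ℝ → ℝ)
    (hv : ContDiff ℝ (⊤ : ℕ∞) (fun p : EuclideanSpace ℝ (Fin n) × ℝ => v p.1 p.2)) :
    ∀ x ∈ Ω, ∀ t ∈ Ioo 0 T,
      (deriv (v x) t + lam * (T - t + a) ^ (lam - 1) * v x t +
          β * lap (fun y => v y t) x) ^ 2 ≥
        lam ^ 2 / 2 * (T - t + a) ^ (lam - 2) * v x t ^ 2 +
        deriv (fun s =>
          lam * (T - s + a) ^ (lam - 1) * v x s ^ 2 -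
            β * ‖gradient (fun y => v y s) x‖ ^ 2) t +
        ∑ i : Fin n,
          fderiv ℝ (fun y =>
            2 * β * deriv (v y) t *
              fderiv ℝ (fun z => v z t) y (EuclideanSpace.single i 1)) x
            (EuclideanSpace.single i 1) := by
  intro x hx t ht
  obtain ⟨ht0, htT⟩ := ht
  have hs : (0:ℝ) < T - t + a := by linarith
  set F : EuclideanSpace ℝ (Fin n) × ℝ → ℝ := fun p => v p.1 p.2 with hFdef
  have hFc : ContDiff ℝ (⊤ : ℕ∞) F := hv
  set G := fderiv ℝ F with hGdef
  have hGc : ContDiff ℝ (⊤ : ℕ∞) G := hFc.fderiv_right (by simp)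
  have hFd : ∀ p, HasFDerivAt F (G p) p := fun p => (hFc.differentiable (by simp) p).hasFDerivAt
  set H := fderiv ℝ G (x, t) with hHdef
  have hGd : HasFDerivAt G H (x, t) := (hGc.differentiable (by simp) (x, t)).hasFDerivAt
  have hsymm : ∀ u w, H u w = H w u := second_derivative_symmetric hFd hGd
  -- curve lemmas
  have hcurve : ∀ (y : EuclideanSpace ℝ (Fin n)) (s : ℝ),
      HasDerivAt (fun r : ℝ => (y, r)) ((0 : EuclideanSpace ℝ (Fin n)), (1:ℝ)) s :=
    fun y s => (hasDerivAt_const s y).prodMk (hasDerivAt_id s)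
  -- time derivative of v
  have hvt : ∀ (y : EuclideanSpace ℝ (Fin n)) (s : ℝ),
      HasDerivAt (v y) (G (y, s) (0, 1)) s := by
    intro y s
    exact (hFd (y, s)).comp_hasDerivAt s (hcurve y s)
  -- spatial derivative of v
  have hvx : ∀ (y : EuclideanSpace ℝ (Fin n)) (s : ℝ),
      HasFDerivAt (fun z => v z s)
        ((G (y, s)).comp (ContinuousLinearMap.inl ℝ (EuclideanSpace ℝ (Fin n)) ℝ)) y := by
    intro y s
    exact (hFd (y, s)).comp y (hasFDerivAt_prodMk_left (𝕜 := ℝ) y s)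
  -- second derivatives
  have hmix : ∀ (w : EuclideanSpace ℝ (Fin n) × ℝ),
      HasFDerivAt (fun y => G (y, t) w)
        ((ContinuousLinearMap.apply ℝ ℝ w).comp
          (H.comp (ContinuousLinearMap.inl ℝ (EuclideanSpace ℝ (Fin n)) ℝ))) x := by
    intro w
    have h1 : HasFDerivAt (fun y => G (y, t))
        (H.comp (ContinuousLinearMap.inl ℝ (EuclideanSpace ℝ (Fin n)) ℝ)) x :=
      hGd.comp x (hasFDerivAt_prodMk_left x t)
    exact (ContinuousLinearMap.apply ℝ ℝ w).hasFDerivAt.comp x h1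
  have hmixt : ∀ (w : EuclideanSpace ℝ (Fin n) × ℝ),
      HasDerivAt (fun s => G (x, s) w) (H (0, 1) w) t := by
    intro w
    have h1 : HasFDerivAt (fun p => G p w) ((ContinuousLinearMap.apply ℝ ℝ w).comp H) (x, t) :=
      (ContinuousLinearMap.apply ℝ ℝ w).hasFDerivAt.comp (x, t) hGd
    have h2 := h1.comp_hasDerivAt t (hcurve x t)
    simpa [Function.comp_def] using h2
  -- gradient norm squared
  have hgrad : ∀ s : ℝ, ‖gradient (fun y => v y s) x‖ ^ 2 =
      ∑ i : Fin n, (G (x, s) (EuclideanSpace.single i 1, 0)) ^ 2 := by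
    intro s
    have hg : gradient (fun y => v y s) x =
        (InnerProductSpace.toDual ℝ (EuclideanSpace ℝ (Fin n))).symm
          ((G (x, s)).comp (ContinuousLinearMap.inl ℝ (EuclideanSpace ℝ (Fin n)) ℝ)) := by
      rw [gradient, (hvx x s).fderiv]
    rw [hg, EuclideanSpace.norm_eq, Real.sq_sqrt (by positivity)]
    refine Finset.sum_congr rfl fun i _ => ?_
    rw [Real.norm_eq_abs, sq_abs]
    have hcomp : ((InnerProductSpace.toDual ℝ (EuclideanSpace ℝ (Fin n))).symm
        ((G (x, s)).comp (ContinuousLinearMap.inl ℝ (EuclideanSpace ℝ (Fin n)) ℝ))) i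
        = inner ℝ ((InnerProductSpace.toDual ℝ (EuclideanSpace ℝ (Fin n))).symm
            ((G (x, s)).comp (ContinuousLinearMap.inl ℝ (EuclideanSpace ℝ (Fin n)) ℝ)))
            (EuclideanSpace.single i (1:ℝ)) := by
      rw [EuclideanSpace.inner_single_right]; simp
    rw [hcomp, InnerProductSpace.toDual_symm_apply]
    simp
  -- laplacian
  have hlap : lap (fun y => v y t) x =
      ∑ i : Fin n, H (EuclideanSpace.single i 1, 0) (EuclideanSpace.single i 1, 0) := by
    unfold lap
    refine Finset.sum_congr rfl fun i _ => ?_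
    have hfun : (fun y => fderiv ℝ (fun z => v z t) y (EuclideanSpace.single i 1)) =
        fun y => G (y, t) (EuclideanSpace.single i 1, 0) := by
      funext y
      rw [(hvx y t).fderiv]
      simp
    rw [hfun, (hmix (EuclideanSpace.single i 1, 0)).fderiv]
    simp
  -- derivative of the power factor
  have hpow : HasDerivAt (fun s : ℝ => (T - s + a) ^ (lam - 1))
      (-((lam - 1) * (T - t + a) ^ (lam - 2))) t := by
    have hinner : HasDerivAt (fun s : ℝ => T - s + a) (-1) t := by
      simpa using ((hasDerivAt_id t).const_sub T).add_const a
    have houter := Real.hasDerivAt_rpow_const (x := T - t + a) (p := lam - 1)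
      (Or.inl (ne_of_gt hs))
    have h2 : HasDerivAt (fun s : ℝ => (T - s + a) ^ (lam - 1))
        ((lam - 1) * (T - t + a) ^ (lam - 1 - 1) * (-1)) t := by have := houter.comp t hinner; exact this
    convert h2 using 1
    rw [show lam - 1 - 1 = lam - 2 by ring]
    ring
  -- derivative of the gradient-square sum
  have hsum : HasDerivAt
      (fun s => ∑ i : Fin n, (G (x, s) (EuclideanSpace.single i 1, 0)) ^ 2)
      (∑ i : Fin n, 2 * G (x, t) (EuclideanSpace.single i 1, 0) *
        H (0, 1) (EuclideanSpace.single i 1, 0)) t := by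
    refine HasDerivAt.fun_sum fun i _ => ?_
    have h := (hmixt (EuclideanSpace.single i 1, 0)).fun_pow 2
    convert h using 1
    · rfl
    push_cast
    ring
  -- derivative of the whole time-dependent expression
  have hphi : HasDerivAt (fun s =>
      lam * (T - s + a) ^ (lam - 1) * v x s ^ 2 -
        β * ‖gradient (fun y => v y s) x‖ ^ 2)
      (lam * (-((lam - 1) * (T - t + a) ^ (lam - 2))) * v x t ^ 2
        + lam * (T - t + a) ^ (lam - 1) * (2 * v x t * G (x, t) (0, 1))
        - β * ∑ i : Fin n, 2 * G (x, t) (EuclideanSpace.single i 1, 0) *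
            H (0, 1) (EuclideanSpace.single i 1, 0)) t := by
    have h1 : HasDerivAt (fun s => lam * (T - s + a) ^ (lam - 1) * v x s ^ 2)
        (lam * (-((lam - 1) * (T - t + a) ^ (lam - 2))) * v x t ^ 2
          + lam * (T - t + a) ^ (lam - 1) * (2 * v x t * G (x, t) (0, 1))) t := by
      have h := (hpow.const_mul lam).fun_mul ((hvt x t).fun_pow 2)
      convert h using 1
      · rfl
      · rfl
      push_cast
      ring
    have h3 := h1.sub (hsum.const_mul β)
    have hfun : (fun s =>
        lam * (T - s + a) ^ (lam - 1) * v x s ^ 2 -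
          β * ‖gradient (fun y => v y s) x‖ ^ 2)
        = fun s => lam * (T - s + a) ^ (lam - 1) * v x s ^ 2 -
            β * ∑ i : Fin n, (G (x, s) (EuclideanSpace.single i 1, 0)) ^ 2 := by
      funext s
      rw [hgrad s]
    rw [hfun]
    exact h3
  -- the divergence term
  have hlast : ∀ i : Fin n,
      fderiv ℝ (fun y => 2 * β * deriv (v y) t *
          fderiv ℝ (fun z => v z t) y (EuclideanSpace.single i 1)) x (EuclideanSpace.single i 1)
      = 2 * β * (H (EuclideanSpace.single i 1, 0) (0, 1) *
            G (x, t) (EuclideanSpace.single i 1, 0)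
          + G (x, t) (0, 1) *
            H (EuclideanSpace.single i 1, 0) (EuclideanSpace.single i 1, 0)) := by
    intro i
    have hfun : (fun y => 2 * β * deriv (v y) t *
        fderiv ℝ (fun z => v z t) y (EuclideanSpace.single i 1))
        = fun y => 2 * β * G (y, t) (0, 1) * G (y, t) (EuclideanSpace.single i 1, 0) := by
      funext y
      rw [(hvt y t).deriv, (hvx y t).fderiv]
      simp
    rw [hfun]
    have hA := (hmix (0, 1)).const_mul (2 * β)
    have hB := hmix (EuclideanSpace.single i 1, 0)
    have hAB := hA.fun_mul hB
    rw [hAB.fderiv]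
    simp only [ContinuousLinearMap.add_apply, ContinuousLinearMap.smul_apply,
      ContinuousLinearMap.coe_comp', Function.comp_apply, ContinuousLinearMap.inl_apply,
      ContinuousLinearMap.apply_apply, ContinuousLinearMap.coe_smul', Pi.smul_apply,
      smul_eq_mul]
    ring
  -- rewrite everything
  rw [hlap, (hvt x t).deriv, hphi.deriv, Finset.sum_congr rfl (fun i _ => hlast i)]
  -- algebraic finish
  set V := v x t with hV
  set Vt := G (x, t) (0, 1) with hVt
  set A := (T - t + a) ^ (lam - 1) with hA
  set B := (T - t + a) ^ (lam - 2) with hB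
  set Lp := ∑ i : Fin n, H (EuclideanSpace.single i 1, 0) (EuclideanSpace.single i 1, 0) with hLp
  have key2 : ∑ i : Fin n, 2 * β * (H (EuclideanSpace.single i 1, 0) (0, 1) *
        G (x, t) (EuclideanSpace.single i 1, 0)
      + G (x, t) (0, 1) * H (EuclideanSpace.single i 1, 0) (EuclideanSpace.single i 1, 0))
      = 2 * β * (∑ i : Fin n, G (x, t) (EuclideanSpace.single i 1, 0) *
          H (0, 1) (EuclideanSpace.single i 1, 0)) + 2 * β * Vt * Lp := by
    rw [hLp, Finset.mul_sum, Finset.mul_sum, ← Finset.sum_add_distrib]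
    refine Finset.sum_congr rfl fun i _ => ?_
    rw [hsymm (0, 1) (EuclideanSpace.single i 1, 0)]
    ring
  rw [key2]
  have key1 : ∑ i : Fin n, 2 * G (x, t) (EuclideanSpace.single i 1, 0) *
      H (0, 1) (EuclideanSpace.single i 1, 0)
      = 2 * ∑ i : Fin n, G (x, t) (EuclideanSpace.single i 1, 0) *
          H (0, 1) (EuclideanSpace.single i 1, 0) := by
    rw [Finset.mul_sum]
    refine Finset.sum_congr rfl fun i _ => ?_
    ring
  rw [key1]
  set S1 := ∑ i : Fin n, G (x, t) (EuclideanSpace.single i 1, 0) *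
      H (0, 1) (EuclideanSpace.single i 1, 0) with hS1
  have hBpos : 0 ≤ B := Real.rpow_nonneg hs.le _
  have hBV : 0 ≤ lam * (lam - 2) * (B * V ^ 2) := by
    have h1 : (0:ℝ) ≤ lam - 2 := by linarith
    have h2 : (0:ℝ) ≤ lam := by linarith
    exact mul_nonneg (mul_nonneg h2 h1) (mul_nonneg hBpos (sq_nonneg V))
  nlinarith [sq_nonneg Vt, sq_nonneg (lam * A * V + β * Lp), hBV]
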